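/- Let Φ ≻ 0 and let 𝓕, 𝓑 : ℝ^q → ℝ^q. Suppose there exist 0 ≤ ρ_f, ρ_b, γ ≤ 1 and positive semidefinite matrices Ψ_b, Ψ_f such that for all ω, ω': ‖𝓑(ω)-𝓑(ω')‖²_{Φ+Ψ_b} ≤ ρ_b²‖ω-ω'‖²_Φ, ‖𝓕(ω)-𝓕(ω')‖²_Φ ≤ ρ_f²‖ω-ω'‖²_{Φ-Ψ_f}, and Ψ_b + Ψ_f ⪰ γ(Φ + Ψ_b). Then the composition 𝓑∘𝓕 is Lipschitz with constant ρ = ρ_b ρ_f √(1-γ) in the norm ‖·‖_{Φ+Ψ_b}. -/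

import Mathlib

noncomputable section
open Matrix

abbrev Evec (q : ℕ) := EuclideanSpace ℝ (Fin q)

noncomputable def qform {ι : Type*} [Fintype ι] [DecidableEq ι]
    (M : Matrix ι ι ℝ) (v : EuclideanSpace ℝ ι) : ℝ :=
  inner ℝ (Matrix.toEuclideanLin M v) v

/-! The hypothesis on `Ψ_b + Ψ_f` is the Loewner inequality `Φ - Ψ_f ⪯ (1 - γ)(Φ + Ψ_b)`
rearranged, so A2 gives `‖𝓕ω - 𝓕ω'‖²_Φ ≤ ρ_f²(1 - γ)‖ω - ω'‖²_{Φ+Ψ_b}`; chaining with A1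
and taking square roots yields the bound. -/

section QuadraticForm

variable {ι : Type*} [Fintype ι] [DecidableEq ι]

lemma qform_eq_dotProduct (M : Matrix ι ι ℝ) (v : EuclideanSpace ℝ ι) :
    qform M v = v.ofLp ⬝ᵥ M *ᵥ v.ofLp := by
  rw [qform, real_inner_comm, EuclideanSpace.inner_eq_star_dotProduct]
  simp [Matrix.toLpLin_apply, dotProduct_comm]

lemma qform_nonneg {M : Matrix ι ι ℝ} (hM : M.PosSemidef) (v : EuclideanSpace ℝ ι) :
    0 ≤ qform M v := by
  rw [qform_eq_dotProduct]
  exact hM.dotProduct_mulVec_nonneg _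

lemma qform_sub (M N : Matrix ι ι ℝ) (v : EuclideanSpace ℝ ι) :
    qform (M - N) v = qform M v - qform N v := by
  simp [qform_eq_dotProduct, Matrix.sub_mulVec, dotProduct_sub]

lemma qform_smul (c : ℝ) (M : Matrix ι ι ℝ) (v : EuclideanSpace ℝ ι) :
    qform (c • M) v = c * qform M v := by
  simp [qform_eq_dotProduct, Matrix.smul_mulVec, dotProduct_smul, smul_eq_mul]

lemma qform_le_qform_of_posSemidef_sub {M N : Matrix ι ι ℝ} (h : (M - N).PosSemidef)
    (v : EuclideanSpace ℝ ι) : qform N v ≤ qform M v := by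
  have := qform_nonneg h v
  rw [qform_sub] at this
  linarith

end QuadraticForm

theorem partial_contractivity_general
    (q : ℕ) (ρf ρb γ : ℝ)
    (hρf : 0 ≤ ρf) (hρb : 0 ≤ ρb)
    (hγ1 : γ ≤ 1)
    (Φ Ψb Ψf : Matrix (Fin q) (Fin q) ℝ)
    (B Fw : Evec q → Evec q)
    (hA1 : ∀ ω ω', qform (Φ + Ψb) (B ω - B ω') ≤ ρb ^ 2 * qform Φ (ω - ω'))
    (hA2 : ∀ ω ω', qform Φ (Fw ω - Fw ω') ≤ ρf ^ 2 * qform (Φ - Ψf) (ω - ω'))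
    (hmat : (Ψb + Ψf - γ • (Φ + Ψb)).PosSemidef) :
    ∀ ω ω', Real.sqrt (qform (Φ + Ψb) (B (Fw ω) - B (Fw ω'))) ≤
      ρb * ρf * Real.sqrt (1 - γ) * Real.sqrt (qform (Φ + Ψb) (ω - ω')) := by
  intro ω ω'
  have hloewner : qform (Φ - Ψf) (ω - ω') ≤ (1 - γ) * qform (Φ + Ψb) (ω - ω') := by
    rw [← qform_smul]
    apply qform_le_qform_of_posSemidef_sub
    convert hmat using 1
    module
  have hF := (hA2 ω ω').trans (mul_le_mul_of_nonneg_left hloewner (sq_nonneg ρf))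
  have hBF := (hA1 (Fw ω) (Fw ω')).trans (mul_le_mul_of_nonneg_left hF (sq_nonneg ρb))
  calc Real.sqrt (qform (Φ + Ψb) (B (Fw ω) - B (Fw ω')))
      ≤ Real.sqrt (ρb ^ 2 * (ρf ^ 2 * ((1 - γ) * qform (Φ + Ψb) (ω - ω')))) :=
        Real.sqrt_le_sqrt hBF
    _ = ρb * ρf * Real.sqrt (1 - γ) * Real.sqrt (qform (Φ + Ψb) (ω - ω')) := by
        rw [Real.sqrt_mul (sq_nonneg ρb), Real.sqrt_mul (sq_nonneg ρf),
          Real.sqrt_mul (sub_nonneg.mpr hγ1), Real.sqrt_sq hρb, Real.sqrt_sq hρf]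
        ring

/-- Partial contractivity: if the backward step `𝓑` and forward step `𝓕` satisfy the
weighted estimates A1 and A2 and `Ψ_b + Ψ_f ⪰ γ(Φ + Ψ_b)`, then the composition
`𝓑 ∘ 𝓕` is Lipschitz with constant `ρ_b ρ_f √(1-γ)` in the norm `‖·‖_{Φ+Ψ_b}`. -/
theorem partial_contractivity
    (q : ℕ) (ρf ρb γ : ℝ)
    (hρf : 0 ≤ ρf) (hρf1 : ρf ≤ 1) (hρb : 0 ≤ ρb) (hρb1 : ρb ≤ 1)
    (hγ : 0 ≤ γ) (hγ1 : γ ≤ 1)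
    (Φ Ψb Ψf : Matrix (Fin q) (Fin q) ℝ)
    (hΦ : Φ.PosDef) (hΨb : Ψb.PosSemidef) (hΨf : Ψf.PosSemidef)
    (B Fw : Evec q → Evec q)
    (hA1 : ∀ ω ω', qform (Φ + Ψb) (B ω - B ω') ≤ ρb ^ 2 * qform Φ (ω - ω'))
    (hA2 : ∀ ω ω', qform Φ (Fw ω - Fw ω') ≤ ρf ^ 2 * qform (Φ - Ψf) (ω - ω'))
    (hmat : (Ψb + Ψf - γ • (Φ + Ψb)).PosSemidef) :
    ∀ ω ω', Real.sqrt (qform (Φ + Ψb) (B (Fw ω) - B (Fw ω'))) ≤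
      ρb * ρf * Real.sqrt (1 - γ) * Real.sqrt (qform (Φ + Ψb) (ω - ω')) :=
  partial_contractivity_general q ρf ρb γ hρf hρb hγ1 Φ Ψb Ψf B Fw hA1 hA2 hmat
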